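/- arXiv:1409.0569 — 2 statements merged into one kernel-verified Lean document; each statement's English description precedes it below -/
import Mathlib

section
/- Let (Ω, F, P) be a probability space and ζ : Ω → ℝ square-integrable with E[ζ²] = 1. If for some constants ρ, δ > 0 the entropy bound E[ζ² log(ζ²/E[ζ²])] is finite, then E[ζ²] ≤ (exp(2/(ρδ²)) + ρδ²/(2e))²·(E[|ζ|])² + (ρδ²/2)·E[ζ² log(ζ²/E[ζ²])]. (This follows from the pointwise inequality ζ² ≤ (exp(2/(ρδ²)) + ρδ²/(2e))|ζ| + (ρδ²/4)ζ² log ζ², taking expectation and applying Young's inequality to absorb E[|ζ|].) -/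
open MeasureTheory Real

lemma neg_exp_neg_one_le_mul_log {t : ℝ} (ht : 0 < t) : -exp (-1) ≤ t * log t := by
  have h := mul_exp_neg_le_exp_neg_one (-log t)
  rw [neg_neg, exp_log ht] at h
  linarith

/- Beyond `exp c⁻¹` the term `c t log t` dominates `t`, and below it
`c t log t ≥ -c / e`. -/
lemma le_exp_inv_add_mul_mul_log {c t : ℝ} (hc : 0 < c) (ht : 0 ≤ t) :
    t ≤ exp c⁻¹ + c / exp 1 + c * (t * log t) := by
  rcases ht.eq_or_lt with rfl | ht
  · simp only [zero_mul, mul_zero, add_zero]; positivity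
  rcases le_or_gt (exp c⁻¹) t with hbig | hsmall
  · have hlog : c⁻¹ ≤ log t := (le_log_iff_exp_le ht).mpr hbig
    have : t ≤ c * (t * log t) := by
      calc t = c * (t * c⁻¹) := by field_simp
        _ ≤ c * (t * log t) := by gcongr
    have : 0 ≤ c / exp 1 := by positivity
    linarith [exp_pos c⁻¹]
  · have hmin : -exp (-1) ≤ t * log t := neg_exp_neg_one_le_mul_log ht
    have : c * -exp (-1) ≤ c * (t * log t) := by gcongr
    rw [exp_neg] at this
    have : c / exp 1 = c * (exp 1)⁻¹ := div_eq_mul_inv c (exp 1)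
    linarith

lemma sq_le_mul_abs_add_mul_sq_mul_log_sq {c : ℝ} (hc : 0 < c) (x : ℝ) :
    x ^ 2 ≤ (exp c⁻¹ + c / exp 1) * |x| + c / 2 * (x ^ 2 * log (x ^ 2)) := by
  have h := mul_le_mul_of_nonneg_left (le_exp_inv_add_mul_mul_log hc (abs_nonneg x))
    (abs_nonneg x)
  rw [← sq_abs x, log_pow]
  push_cast
  nlinarith [h]

lemma integral_sq_le_integral_abs_add_integral_sq_mul_log_sq {Ω : Type*} [MeasurableSpace Ω]
    {μ : Measure Ω} {ζ : Ω → ℝ} {c : ℝ} (hc : 0 < c) (h1 : Integrable ζ μ)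
    (h2 : Integrable (fun ω => ζ ω ^ 2) μ)
    (hent : Integrable (fun ω => ζ ω ^ 2 * log (ζ ω ^ 2)) μ) :
    ∫ ω, ζ ω ^ 2 ∂μ ≤ (exp c⁻¹ + c / exp 1) * ∫ ω, |ζ ω| ∂μ
      + c / 2 * ∫ ω, ζ ω ^ 2 * log (ζ ω ^ 2) ∂μ := by
  rw [← integral_const_mul, ← integral_const_mul,
    ← integral_add (h1.abs.const_mul _) (hent.const_mul _)]
  exact integral_mono h2 ((h1.abs.const_mul _).add (hent.const_mul _))
    fun ω => sq_le_mul_abs_add_mul_sq_mul_log_sq hc (ζ ω)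

/-- Let `(Ω, F, P)` be a probability space and `ζ` square integrable with `E[ζ²] = 1`.
If the entropy `E[ζ² log(ζ²/E[ζ²])]` is finite (integrable), then for all `ρ, δ > 0`,
`E[ζ²] ≤ (exp(2/(ρδ²)) + ρδ²/(2e))² (E|ζ|)² + (ρδ²/2) E[ζ² log(ζ²/E[ζ²])]`. -/
theorem stmt3 {Ω : Type*} [MeasurableSpace Ω] (P : Measure Ω) [IsProbabilityMeasure P]
    (ζ : Ω → ℝ) (ρ δ : ℝ) (hρ : 0 < ρ) (hδ : 0 < δ)
    (hζ : MemLp ζ 2 P) (hnorm : ∫ ω, ζ ω ^ 2 ∂P = 1)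
    (hent : Integrable (fun ω => ζ ω ^ 2 * Real.log (ζ ω ^ 2 / ∫ ω', ζ ω' ^ 2 ∂P)) P) :
    ∫ ω, ζ ω ^ 2 ∂P ≤
      (Real.exp (2 / (ρ * δ ^ 2)) + ρ * δ ^ 2 / (2 * Real.exp 1)) ^ 2 * (∫ ω, |ζ ω| ∂P) ^ 2
        + ρ * δ ^ 2 / 2 * ∫ ω, ζ ω ^ 2 * Real.log (ζ ω ^ 2 / ∫ ω', ζ ω' ^ 2 ∂P) ∂P := by
  simp only [hnorm, div_one] at hent ⊢
  set c := ρ * δ ^ 2 / 2 with hc_def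
  have hc : 0 < c := by positivity
  have key := integral_sq_le_integral_abs_add_integral_sq_mul_log_sq hc
    (hζ.integrable one_le_two) hζ.integrable_sq hent
  have hA : exp c⁻¹ + c / exp 1 = exp (2 / (ρ * δ ^ 2)) + ρ * δ ^ 2 / (2 * exp 1) := by
    rw [hc_def, inv_div, div_div, mul_comm 2 (exp 1)]
  rw [hnorm, hA] at key
  -- Young: `A x ≤ ((A x)² + 1) / 2` absorbs the first moment.
  nlinarith [sq_nonneg ((exp (2 / (ρ * δ ^ 2)) + ρ * δ ^ 2 / (2 * exp 1)) * ∫ ω, |ζ ω| ∂P - 1)]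
end

section
/- Let d ≥ 1, c > 0, μ > 0 and 1 ≤ r < d/(d−1). Then the kernel K(x) = e^{−c√μ|x|}/(1+|x|^{d−1}) on ℝ^d satisfies ‖K‖_{L^r(ℝ^d)} ≤ C(d, c, r)·(1 + μ^{−((1−d)r+d)/(2r)}). -/
/-!
Dropping the 1 in 1 + |x|^{d-1} and passing to polar coordinates gives
∫ K^r ≤ d |B₁| ∫₀^∞ t^{β-1} e^{-c r √μ t} dt with β = (1-d)r + d, which is positive exactly
when r < d/(d-1). The radial integral is Γ(β) (c r √μ)^{-β}, so ‖K‖_r ≤ C μ^{-β/(2r)}.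
-/

open MeasureTheory Set Real Module

lemma sub_mul_add_pos_of_lt_div_sub_one {d r : ℝ} (hd : 1 < d) (hr : r < d / (d - 1)) :
    0 < (1 - d) * r + d := by
  have := (lt_div_iff₀ (sub_pos.mpr hd)).mp hr
  linarith

-- For `d ≤ 1` the quotient `d / (d - 1)` is `0` (for `d = 1` through division by zero).
lemma two_le_of_one_le_of_lt_div_sub_one {d : ℕ} {r : ℝ} (hr : 1 ≤ r)
    (hr' : r < d / (d - 1)) : 2 ≤ d := by
  by_contra! h
  interval_cases d <;> norm_num at hr' <;> linarith

lemma rpow_mul_exp_div_one_add_rpow_rpow_le {n a r t : ℝ} (hr : 0 < r) (ht : 0 < t) :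
    t ^ n * (exp (-(a * t)) / (1 + t ^ n)) ^ r ≤ t ^ (n * (1 - r)) * exp (-(a * r * t)) := by
  have htn : 0 ≤ t ^ n := rpow_nonneg ht.le n
  have hden : t ^ (n * r) ≤ (1 + t ^ n) ^ r := by
    rw [rpow_mul ht.le]
    exact rpow_le_rpow htn (by linarith) hr.le
  calc t ^ n * (exp (-(a * t)) / (1 + t ^ n)) ^ r
      = t ^ n * (exp (-(a * r * t)) / (1 + t ^ n) ^ r) := by
        rw [div_rpow (exp_nonneg _) (by positivity), ← exp_mul]
        ring_nf
    _ ≤ t ^ n * (exp (-(a * r * t)) / t ^ (n * r)) := by gcongr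
    _ = t ^ (n * (1 - r)) * exp (-(a * r * t)) := by
        rw [mul_one_sub, rpow_sub ht]
        ring

section

variable {E : Type*} [NormedAddCommGroup E] [NormedSpace ℝ E] [Nontrivial E]
  [FiniteDimensional ℝ E] [MeasurableSpace E] [BorelSpace E] (μ : Measure E) [μ.IsAddHaarMeasure]

theorem integral_rpow_exp_div_one_add_norm_rpow_le {a r : ℝ} (ha : 0 < a) (hr : 0 < r)
    (hβ : 0 < (1 - finrank ℝ E) * r + finrank ℝ E) :
    ∫ x, (exp (-(a * ‖x‖)) / (1 + ‖x‖ ^ ((finrank ℝ E : ℝ) - 1))) ^ r ∂μ ≤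
      finrank ℝ E * μ.real (Metric.ball 0 1) *
        (1 / (a * r)) ^ ((1 - finrank ℝ E) * r + finrank ℝ E) *
        Gamma ((1 - finrank ℝ E) * r + finrank ℝ E) := by
  set d := finrank ℝ E
  set β : ℝ := (1 - d) * r + d
  have hd : 1 ≤ d := finrank_pos
  have hgamma := integral_rpow_mul_exp_neg_mul_Ioi hβ (mul_pos ha hr)
  have hint : IntegrableOn (fun t : ℝ ↦ t ^ (β - 1) * exp (-(a * r * t))) (Ioi 0) :=
    .of_integral_ne_zero (by rw [hgamma]; have := Gamma_pos_of_pos hβ; positivity)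
  have hradial : ∀ t ∈ Ioi (0 : ℝ), t ^ (d - 1) * (exp (-(a * t)) / (1 + t ^ ((d : ℝ) - 1))) ^ r
      ≤ t ^ (β - 1) * exp (-(a * r * t)) := by
    intro t ht
    have hβ' : β - 1 = ((d : ℝ) - 1) * (1 - r) := by ring
    rw [hβ', ← rpow_natCast, Nat.cast_sub hd, Nat.cast_one]
    exact rpow_mul_exp_div_one_add_rpow_rpow_le hr ht
  rw [integral_fun_norm_addHaar μ (fun t ↦ (exp (-(a * t)) / (1 + t ^ ((d : ℝ) - 1))) ^ r)]
  have hmono : ∫ t in Ioi 0, t ^ (d - 1) * (exp (-(a * t)) / (1 + t ^ ((d : ℝ) - 1))) ^ r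
      ≤ ∫ t in Ioi 0, t ^ (β - 1) * exp (-(a * r * t)) := by
    refine integral_mono_of_nonneg ?_ hint
      ((ae_restrict_iff' measurableSet_Ioi).mpr (.of_forall hradial))
    filter_upwards [ae_restrict_mem measurableSet_Ioi] with t (ht : 0 < t)
    positivity
  simp only [nsmul_eq_mul, smul_eq_mul]
  calc (d : ℝ) * (μ.real (Metric.ball 0 1) * ∫ t in Ioi 0,
        t ^ (d - 1) * (exp (-(a * t)) / (1 + t ^ ((d : ℝ) - 1))) ^ r)
      ≤ d * (μ.real (Metric.ball 0 1) * ∫ t in Ioi 0, t ^ (β - 1) * exp (-(a * r * t))) := by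
        gcongr
    _ = _ := by rw [hgamma]; ring

end

lemma one_div_mul_sqrt_mul_rpow {c r μ : ℝ} (hc : 0 < c) (hr : 0 < r) (hμ : 0 < μ) (β : ℝ) :
    (1 / (c * √μ * r)) ^ β = (1 / (c * r)) ^ β * μ ^ (-β / 2) := by
  rw [show 1 / (c * √μ * r) = 1 / (c * r) * (√μ)⁻¹ by field_simp,
    mul_rpow (by positivity) (by positivity), sqrt_eq_rpow, ← rpow_neg hμ.le, ← rpow_mul hμ.le]
  ring_nf

theorem stmt6_general (d : ℕ) (c r : ℝ) (hc : 0 < c)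
    (hr : 1 ≤ r) (hr' : r < (d : ℝ) / ((d : ℝ) - 1)) :
    ∃ C : ℝ, 0 < C ∧ ∀ μ : ℝ, 0 < μ →
      (∫ x : EuclideanSpace ℝ (Fin d),
          (Real.exp (-c * Real.sqrt μ * ‖x‖) / (1 + ‖x‖ ^ ((d : ℝ) - 1))) ^ r) ^ (1 / r)
        ≤ C * (1 + μ ^ (-(((1 : ℝ) - d) * r + d) / (2 * r))) := by
  have hd : 2 ≤ d := two_le_of_one_le_of_lt_div_sub_one hr hr'
  have : Nontrivial (EuclideanSpace ℝ (Fin d)) := by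
    have : Nonempty (Fin d) := ⟨⟨0, by omega⟩⟩
    infer_instance
  set β : ℝ := (1 - d) * r + d
  have hβ : 0 < β := sub_mul_add_pos_of_lt_div_sub_one (by exact_mod_cast hd) hr'
  have hr0 : 0 < r := by linarith
  set M : ℝ := d * volume.real (Metric.ball (0 : EuclideanSpace ℝ (Fin d)) 1) *
    (1 / (c * r)) ^ β * Gamma β
  have hM : 0 ≤ M := by have := Gamma_pos_of_pos hβ; positivity
  refine ⟨M ^ (1 / r) + 1, by positivity, fun μ hμ ↦ ?_⟩
  have hK := integral_rpow_exp_div_one_add_norm_rpow_le (E := EuclideanSpace ℝ (Fin d)) volume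
    (mul_pos hc (sqrt_pos.mpr hμ)) hr0
  simp only [finrank_euclideanSpace_fin, one_div_mul_sqrt_mul_rpow hc hr0 hμ] at hK
  have hI : ∫ x : EuclideanSpace ℝ (Fin d),
      (exp (-c * √μ * ‖x‖) / (1 + ‖x‖ ^ ((d : ℝ) - 1))) ^ r ≤ M * μ ^ (-β / 2) := by
    simp only [neg_mul]
    exact (hK hβ).trans_eq (by ring)
  have hμβ : 0 ≤ μ ^ (-β / (2 * r)) := by positivity
  calc (∫ x : EuclideanSpace ℝ (Fin d),
        (exp (-c * √μ * ‖x‖) / (1 + ‖x‖ ^ ((d : ℝ) - 1))) ^ r) ^ (1 / r)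
      ≤ (M * μ ^ (-β / 2)) ^ (1 / r) :=
        rpow_le_rpow (integral_nonneg fun x ↦ by positivity) hI (by positivity)
    _ = M ^ (1 / r) * μ ^ (-β / (2 * r)) := by
        rw [mul_rpow hM (by positivity), ← rpow_mul hμ.le]
        ring_nf
    _ ≤ (M ^ (1 / r) + 1) * (1 + μ ^ (-β / (2 * r))) := by
        have : 0 ≤ M ^ (1 / r) := by positivity
        nlinarith

/-- For `d ≥ 1`, `c > 0` and `1 ≤ r < d/(d-1)`, the kernel
`K(x) = e^{-c√μ|x|}/(1+|x|^{d-1})` on `ℝ^d` satisfies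
`‖K‖_{L^r} ≤ C(d,c,r) (1 + μ^{-((1-d)r+d)/(2r)})` for every `μ > 0`. -/
theorem stmt6 (d : ℕ) (hd : 1 ≤ d) (c r : ℝ) (hc : 0 < c)
    (hr : 1 ≤ r) (hr' : r < (d : ℝ) / ((d : ℝ) - 1)) :
    ∃ C : ℝ, 0 < C ∧ ∀ μ : ℝ, 0 < μ →
      (∫ x : EuclideanSpace ℝ (Fin d),
          (Real.exp (-c * Real.sqrt μ * ‖x‖) / (1 + ‖x‖ ^ ((d : ℝ) - 1))) ^ r) ^ (1 / r)
        ≤ C * (1 + μ ^ (-(((1 : ℝ) - d) * r + d) / (2 * r))) :=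
  stmt6_general d c r hc hr hr'
end
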